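/- arXiv:1512.01390 — 6 statements merged into one kernel-verified Lean document; each statement's English description precedes it below -/
import Mathlib

section
/- Let M and N be matroids on α with Disjoint M.E N.E, and let P be a matroid on γ. If a function h : α → γ is a strong map from M to P and also a strong map from N to P, then h is a strong map from M.disjointSum N to P; that is, for every flat F of P, the set h ⁻¹' F ∩ (M.E ∪ N.E) is a flat of M.disjointSum N. (This is the universal property making M.disjointSum N the coproduct of M and N with respect to strong maps.) -/
open Set

namespace Matroid

variable {α β γ : Type*}

/-- The rank of a set `X` in a matroid `M`: the size of a largest independent subset of `X`. -/
noncomputable def rk (M : Matroid α) (X : Set α) : ℕ :=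
  sSup (Set.ncard '' {I | M.Indep I ∧ I ⊆ X})

/-- A strong map from `M` to `N` is a function whose image of the ground set lies in the
ground set, and such that the preimage of every flat, intersected with the ground set,
is a flat. -/
def IsStrongMap (M : Matroid α) (N : Matroid β) (f : α → β) : Prop :=
  f '' M.E ⊆ N.E ∧ ∀ F, N.IsFlat F → M.IsFlat (f ⁻¹' F ∩ M.E)

/-- The deletion of `D` from `M`: the restriction of `M` to `M.E \ D`. -/
def delete' (M : Matroid α) (D : Set α) : Matroid α := M ↾ (M.E \ D)

/-- The contraction of `M` by `C`, defined as the dual of the deletion of `C`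
from the dual matroid. -/
def contract' (M : Matroid α) (C : Set α) : Matroid α := (M✶.delete' C)✶

scoped infixl:75 " ＼ " => Matroid.delete'
scoped infixl:75 " ／ " => Matroid.contract'

end Matroid

/-! A set is a flat of `M.disjointSum N` as soon as its traces on `M.E` and `N.E` are flats of `M`
and `N`, since a basis of it in the sum is the union of bases of the two traces. The trace of
`h ⁻¹' F ∩ (M.E ∪ N.E)` on `M.E` is `h ⁻¹' F ∩ M.E`, a flat of `M` because `h` is strong on `M`,
and likewise for `N`. -/

namespace Matroid

section

variable {α : Type*} {M N : Matroid α} {hd : Disjoint M.E N.E} {X : Set α}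

lemma isFlat_disjointSum_of_inter (hXM : M.IsFlat (X ∩ M.E)) (hXN : N.IsFlat (X ∩ N.E))
    (hX : X ⊆ M.E ∪ N.E) : (M.disjointSum N hd).IsFlat X := by
  refine ⟨fun I Y hIX hIY ↦ ?_, by rwa [disjointSum_ground_eq]⟩
  rw [disjointSum_isBasis_iff] at hIX hIY
  have hYM : Y ∩ M.E ⊆ X ∩ M.E := hXM.subset_of_isBasis_of_isBasis hIX.1 hIY.1
  have hYN : Y ∩ N.E ⊆ X ∩ N.E := hXN.subset_of_isBasis_of_isBasis hIX.2.1 hIY.2.1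
  intro y hy
  rcases hIY.2.2.2 hy with hyM | hyN
  · exact (hYM ⟨hy, hyM⟩).1
  · exact (hYN ⟨hy, hyN⟩).1

end

/-- a function that is a strong map from each of `M` and `N` to `P` is a strong
map from `M.disjointSum N` to `P` (universal property of the coproduct). -/
theorem disjointSum_isStrongMap {α γ : Type*} (M N : Matroid α) (P : Matroid γ)
    (hd : Disjoint M.E N.E) (h : α → γ)
    (hM : M.IsStrongMap P h) (hN : N.IsStrongMap P h) :
    (M.disjointSum N hd).IsStrongMap P h := by
  refine ⟨?_, fun F hF ↦ ?_⟩
  · rw [disjointSum_ground_eq, image_union]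
    exact union_subset hM.1 hN.1
  rw [disjointSum_ground_eq]
  have hFM : h ⁻¹' F ∩ (M.E ∪ N.E) ∩ M.E = h ⁻¹' F ∩ M.E := by
    rw [inter_assoc, union_inter_cancel_left]
  have hFN : h ⁻¹' F ∩ (M.E ∪ N.E) ∩ N.E = h ⁻¹' F ∩ N.E := by
    rw [inter_assoc, union_inter_cancel_right]
  refine isFlat_disjointSum_of_inter ?_ ?_ inter_subset_right
  · exact hFM ▸ hM.2 F hF
  · exact hFN ▸ hN.2 F hF

end Matroid
end

section
/- Let f and g be strong maps from a matroid M on α to a matroid N on β, and let R = {x ∈ M.E | f x = g x}. If h : γ → α is a strong map from a matroid P to M such that f (h x) = g (h x) for every x ∈ P.E, then h '' P.E ⊆ R and h is a strong map from P to the restriction M ↾ R; that is, for every flat X of M ↾ R, the set h ⁻¹' X ∩ P.E is a flat of P. (This is the universal property making M ↾ R the equalizer of f and g with respect to strong maps.) -/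
open Set

namespace Matroid

variable {α β γ : Type*}

scoped infixl:75 " ＼ " => Matroid.delete'
scoped infixl:75 " ／ " => Matroid.contract'

end Matroid

namespace Matroid

section

variable {α γ : Type*} {M : Matroid α} {P : Matroid γ} {R X : Set α}

lemma IsFlat.eq_closure_inter_of_restrict (hR : R ⊆ M.E) (hX : (M ↾ R).IsFlat X) :
    X = M.closure X ∩ R := by
  rw [← restrict_closure_eq M (show X ⊆ R from hX.subset_ground) hR, hX.closure]

lemma IsStrongMap.codRestrict {h : γ → α} (hh : P.IsStrongMap M h) (hR : R ⊆ M.E)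
    (himg : h '' P.E ⊆ R) : P.IsStrongMap (M ↾ R) h := by
  refine ⟨himg, fun X hX ↦ ?_⟩
  have hPR : P.E ⊆ h ⁻¹' R := image_subset_iff.1 himg
  rw [hX.eq_closure_inter_of_restrict hR, preimage_inter, inter_assoc,
    inter_eq_right.2 hPR]
  exact hh.2 _ (M.isFlat_closure X)

end

theorem equalizer_universal_general {α β γ : Type*} (M : Matroid α) (P : Matroid γ)
    (f g : α → β)
    (h : γ → α) (hh : P.IsStrongMap M h)
    (heq : ∀ x ∈ P.E, f (h x) = g (h x)) :
    h '' P.E ⊆ {x ∈ M.E | f x = g x} ∧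
      P.IsStrongMap (M ↾ {x ∈ M.E | f x = g x}) h := by
  have himg : h '' P.E ⊆ {x ∈ M.E | f x = g x} := by
    rintro _ ⟨x, hx, rfl⟩
    exact ⟨hh.1 (mem_image_of_mem h hx), heq x hx⟩
  exact ⟨himg, hh.codRestrict (fun _ hx ↦ hx.1) himg⟩

/-- universal property of the equalizer `M ↾ {x ∈ M.E | f x = g x}` of two
strong maps `f g : M → N`. -/
theorem equalizer_universal {α β γ : Type*} (M : Matroid α) (N : Matroid β) (P : Matroid γ)
    (f g : α → β) (hf : M.IsStrongMap N f) (hg : M.IsStrongMap N g)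
    (h : γ → α) (hh : P.IsStrongMap M h)
    (heq : ∀ x ∈ P.E, f (h x) = g (h x)) :
    h '' P.E ⊆ {x ∈ M.E | f x = g x} ∧
      P.IsStrongMap (M ↾ {x ∈ M.E | f x = g x}) h :=
  equalizer_universal_general M P f g h hh heq

end Matroid
end

section
/- Let K be a field, let m, n, p be finite types, and let A : Matrix m n K, B : Matrix p n K, C : Matrix m p K satisfy A = C * B. Then for any sets s ⊆ t of column indices (s, t : Set n with s ⊆ t), the ranks of the column submatrices satisfy rank(A restricted to columns t) + rank(B restricted to columns s) ≤ rank(B restricted to columns t) + rank(A restricted to columns s); that is, rank A_[t] − rank A_[s] ≤ rank B_[t] − rank B_[s]. -/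
open Set

namespace Matroid

variable {α β γ : Type*}

scoped infixl:75 " ＼ " => Matroid.delete'
scoped infixl:75 " ／ " => Matroid.contract'

end Matroid

/-!
Let `V_X` be the span of the columns of `B` indexed by `X`. Since `A = C * B`, the columns of
`A_[X]` span `C(V_X)`, so by rank–nullity `rank A_[X] = dim V_X - dim (V_X ⊓ ker C)`, while
`rank B_[X] = dim V_X`. The claim is then the monotonicity of `dim (V_X ⊓ ker C)` in `X`.
-/

open Module Submodule

theorem Submodule.finrank_map_add_finrank_inf_ker {K V W : Type*} [DivisionRing K]
    [AddCommGroup V] [Module K V] [AddCommGroup W] [Module K W]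
    (f : V →ₗ[K] W) (p : Submodule K V) [FiniteDimensional K p] :
    finrank K (p.map f) + finrank K ↥(p ⊓ LinearMap.ker f) = finrank K p := by
  have h := LinearMap.finrank_range_add_finrank_ker (f ∘ₗ p.subtype)
  rwa [LinearMap.range_comp, range_subtype, LinearMap.ker_comp,
    ← finrank_map_subtype_eq, map_comap_subtype] at h

theorem Submodule.finrank_map_add_finrank_le {K V W : Type*} [DivisionRing K]
    [AddCommGroup V] [Module K V] [AddCommGroup W] [Module K W]
    (f : V →ₗ[K] W) {p q : Submodule K V} [FiniteDimensional K q] (hpq : p ≤ q) :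
    finrank K (q.map f) + finrank K p ≤ finrank K q + finrank K (p.map f) := by
  have : FiniteDimensional K p := finiteDimensional_of_le hpq
  have hp := finrank_map_add_finrank_inf_ker f p
  have hq := finrank_map_add_finrank_inf_ker f q
  have hker : finrank K ↥(p ⊓ LinearMap.ker f) ≤ finrank K ↥(q ⊓ LinearMap.ker f) :=
    finrank_mono (inf_le_inf_right _ hpq)
  omega

namespace Matrix

variable {R m n p : Type*}

theorem rank_submatrix_val_eq_finrank_span [CommSemiring R] (A : Matrix m n R) (s : Set n)
    [Fintype s] :
    (A.submatrix id (Subtype.val : s → n)).rank = finrank R (span R (A.col '' s)) := by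
  rw [rank_eq_finrank_span_cols, image_eq_range]
  rfl

theorem span_col_image_mul [Fintype p] [CommSemiring R] (C : Matrix m p R) (B : Matrix p n R)
    (s : Set n) : span R ((C * B).col '' s) = (span R (B.col '' s)).map C.mulVecLin := by
  rw [map_span, image_image]
  rfl

end Matrix

theorem rank_submatrix_diff_le_general {K : Type*} [Field K] {m n p : Type*}
    [Fintype p]
    (A : Matrix m n K) (B : Matrix p n K) (C : Matrix m p K) (hABC : A = C * B)
    (s t : Set n) [Fintype s] [Fintype t] (hst : s ⊆ t) :
    (A.submatrix id (Subtype.val : t → n)).rank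
      + (B.submatrix id (Subtype.val : s → n)).rank ≤
    (B.submatrix id (Subtype.val : t → n)).rank
      + (A.submatrix id (Subtype.val : s → n)).rank := by
  subst hABC
  simp only [Matrix.rank_submatrix_val_eq_finrank_span]
  rw [Matrix.span_col_image_mul, Matrix.span_col_image_mul]
  exact finrank_map_add_finrank_le C.mulVecLin (span_mono (image_mono hst))

/-- if `A = C * B` then for column sets `s ⊆ t`,
`rank A_[t] - rank A_[s] ≤ rank B_[t] - rank B_[s]`. -/
theorem rank_submatrix_diff_le {K : Type*} [Field K] {m n p : Type*}
    [Fintype m] [Fintype n] [Fintype p]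
    (A : Matrix m n K) (B : Matrix p n K) (C : Matrix m p K) (hABC : A = C * B)
    (s t : Set n) [Fintype s] [Fintype t] (hst : s ⊆ t) :
    (A.submatrix id (Subtype.val : t → n)).rank
      + (B.submatrix id (Subtype.val : s → n)).rank ≤
    (B.submatrix id (Subtype.val : t → n)).rank
      + (A.submatrix id (Subtype.val : s → n)).rank :=
  rank_submatrix_diff_le_general A B C hABC s t hst
end

section
/- Let K be a field and V, W vector spaces over K, and let f, g : V →ₗ[K] W be linear maps such that Submodule.map f X = Submodule.map g X for every submodule X of V. Then there exists a scalar c : K with g = c • f. -/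
open Set

namespace Matroid

variable {α β γ : Type*}

scoped infixl:75 " ＼ " => Matroid.delete'
scoped infixl:75 " ／ " => Matroid.contract'

end Matroid

/-!
Each `g v` lies on the line through `f v`. Hence `ker f ≤ ker g`, so `g` induces an endomorphism
of `range f` mapping every vector into its own line, and such an endomorphism is a homothety
(`LinearMap.exists_eq_smul_id_of_forall_notLinearIndependent`).
-/

namespace LinearMap

open Submodule

variable {R K V W : Type*}

section Semiring

variable [Semiring R] [AddCommMonoid V] [Module R V] [AddCommMonoid W] [Module R W]
  {f g : V →ₗ[R] W}

theorem apply_mem_span_singleton_of_map_span_singleton_eq {v : V}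
    (h : (R ∙ v).map f = (R ∙ v).map g) : g v ∈ R ∙ f v := by
  have : g v ∈ (R ∙ v).map g := mem_map_of_mem (mem_span_singleton_self v)
  rwa [← h, map_span, Set.image_singleton] at this

theorem ker_le_ker_of_forall_mem_span_singleton (h : ∀ v, g v ∈ R ∙ f v) : ker f ≤ ker g :=
  fun v hv ↦ by simpa [mem_ker.1 hv] using h v

end Semiring

theorem not_linearIndependent_pair_of_mem_span_singleton [Ring R] [Nontrivial R]
    [AddCommGroup V] [Module R V] {x y : V} (h : y ∈ R ∙ x) : ¬LinearIndependent R ![x, y] := by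
  intro hli
  obtain ⟨a, rfl⟩ := mem_span_singleton.1 h
  exact neg_ne_zero.2 one_ne_zero (LinearIndependent.pair_iff.1 hli a (-1) (by simp)).2

theorem exists_eq_smul_of_forall_mem_span_singleton [Field K] [AddCommGroup V] [Module K V]
    [AddCommGroup W] [Module K W] {f g : V →ₗ[K] W} (h : ∀ v, g v ∈ K ∙ f v) :
    ∃ c : K, g = c • f := by
  have hg : ∀ v, g v ∈ range f := fun v ↦ span_le.2 (by simp) (h v)
  let φ : range f →ₗ[K] range f := (ker f).liftQ (g.codRestrict _ hg)
    (by simpa using ker_le_ker_of_forall_mem_span_singleton h) ∘ₗ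
      f.quotKerEquivRange.symm.toLinearMap
  have hφ : ∀ v, (φ (f.rangeRestrict v) : W) = g v := fun v ↦ by
    have : f.quotKerEquivRange.symm (f.rangeRestrict v) = (ker f).mkQ v :=
      f.quotKerEquivRange.symm_apply_eq.2 (Subtype.ext (quotKerEquivRange_apply_mk f v).symm)
    simp [φ, this]
  have hφ_line : ∀ y, φ y ∈ K ∙ y := fun y ↦ by
    obtain ⟨v, rfl⟩ := f.surjective_rangeRestrict y
    obtain ⟨a, ha⟩ := mem_span_singleton.1 (h v)
    exact mem_span_singleton.2 ⟨a, Subtype.ext (by simp [hφ, ha])⟩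
  obtain ⟨c, hc⟩ := exists_eq_smul_id_of_forall_notLinearIndependent (f := φ) fun y ↦
    not_linearIndependent_pair_of_mem_span_singleton (hφ_line y)
  refine ⟨c, ext fun v ↦ ?_⟩
  rw [← hφ v, hc]
  rfl

end LinearMap

/-- two linear maps with the same image on every submodule are scalar
multiples of each other. -/
theorem exists_smul_eq_of_map_submodule_eq {K V W : Type*} [Field K]
    [AddCommGroup V] [Module K V] [AddCommGroup W] [Module K W]
    (f g : V →ₗ[K] W)
    (h : ∀ X : Submodule K V, X.map f = X.map g) :
    ∃ c : K, g = c • f :=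
  LinearMap.exists_eq_smul_of_forall_mem_span_singleton fun _ ↦
    LinearMap.apply_mem_span_singleton_of_map_span_singleton_eq (h _)
end

section
/- Let M be a finite matroid on α and N a finite matroid on β, and let f : α → β satisfy f '' M.E ⊆ N.E and the strong-map rank condition: for all X ⊆ Y ⊆ M.E, N.rk (f '' Y) + M.rk X ≤ M.rk Y + N.rk (f '' X). Let Z' ⊆ N.E and Z = f ⁻¹' Z' ∩ M.E. Then f satisfies the same rank condition between the contractions: for all X ⊆ Y ⊆ M.E \ Z, (N ／ Z').rk (f '' Y) + (M ／ Z).rk X ≤ (M ／ Z).rk Y + (N ／ Z').rk (f '' X). (Contraction is functorial on strong maps whose domain contraction set is the preimage of the codomain contraction set.) -/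
open Set

namespace Matroid

variable {α β γ : Type*}

scoped infixl:75 " ＼ " => Matroid.delete'
scoped infixl:75 " ／ " => Matroid.contract'

end Matroid

/-!
Since `rk_{M ／ C} X = rk_M (X ∪ C) - rk_M C`, adding `rk_M C + rk_N Z'` to both sides turns the
claim into `rk_N (f '' Y ∪ Z') + rk_M (X ∪ C) ≤ rk_M (Y ∪ C) + rk_N (f '' X ∪ Z')`. The rank
condition for `X ∪ C ⊆ Y ∪ C` gives this with `f '' C` in place of `Z'`, and submodularity of
`rk_N` allows replacing `f '' C` by the larger set `Z'` in both `N`-terms.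
-/

namespace Matroid

section

variable {α : Type*} {M : Matroid α} {C X Y Z : Set α}

lemma cast_rk_eq_eRk [M.RankFinite] (X : Set α) : (M.rk X : ℕ∞) = M.eRk X := by
  obtain ⟨I, hI⟩ := M.exists_isBasis' X
  have hIfin : I.Finite := hI.indep.finite
  have hmax : IsGreatest (Set.ncard '' {J | M.Indep J ∧ J ⊆ X}) I.ncard := by
    refine ⟨⟨I, ⟨hI.indep, hI.subset⟩, rfl⟩, ?_⟩
    rintro _ ⟨J, ⟨hJ, hJX⟩, rfl⟩
    have hle : J.encard ≤ I.encard := hI.eRk_eq_encard ▸ hJ.encard_le_eRk_of_subset hJX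
    rwa [← hJ.finite.cast_ncard_eq, ← hIfin.cast_ncard_eq, Nat.cast_le] at hle
  rw [rk, hmax.csSup_eq, hIfin.cast_ncard_eq, hI.eRk_eq_encard]

lemma eRk_contract_add_eRk (M : Matroid α) (C X : Set α) :
    (M.contract C).eRk X + M.eRk C = M.eRk (X ∪ C) := by
  obtain ⟨J, hJ⟩ := M.exists_isBasis' C
  obtain ⟨I, hI, hJI⟩ := hJ.indep.subset_isBasis'_of_subset (hJ.subset.trans subset_union_right)
  have hIC : I ∩ C = J :=
    (hJ.eq_of_subset_indep (hI.indep.subset inter_subset_left) (subset_inter hJI hJ.subset)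
      inter_subset_right).symm
  have hcon : (M.contract C).IsBasis' (I \ C) ((X ∪ C) \ C) :=
    hI.contract_isBasis' hJ (hI.indep.subset (union_subset sdiff_subset hJI))
  have hX : (M.contract C).eRk X = (M.contract C).eRk ((X ∪ C) \ C) := by
    rw [← eRk_inter_ground, ← eRk_inter_ground _ ((X ∪ C) \ C), contract_ground]
    congr 1
    tauto_set
  rw [hX, hcon.eRk_eq_encard, hJ.eRk_eq_encard, hI.eRk_eq_encard, ← hIC,
    encard_sdiff_add_encard_inter]

lemma contract'_eq_contract (M : Matroid α) (C : Set α) : M.contract' C = M.contract C := rfl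

lemma rk_contract'_add_rk [M.RankFinite] (C X : Set α) :
    (M.contract' C).rk X + M.rk C = M.rk (X ∪ C) := by
  rw [contract'_eq_contract]
  have h := M.eRk_contract_add_eRk C X
  simp only [← cast_rk_eq_eRk] at h
  exact_mod_cast h

lemma rk_inter_add_rk_union_le [M.RankFinite] (X Y : Set α) :
    M.rk (X ∩ Y) + M.rk (X ∪ Y) ≤ M.rk X + M.rk Y := by
  have h := M.eRk_inter_add_eRk_union_le X Y
  simp only [← cast_rk_eq_eRk] at h
  exact_mod_cast h

lemma rk_mono [M.RankFinite] (hXY : X ⊆ Y) : M.rk X ≤ M.rk Y := by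
  have h := M.eRk_mono hXY
  simp only [← cast_rk_eq_eRk] at h
  exact_mod_cast h

lemma rk_union_add_rk_union_le [M.RankFinite] (hXY : X ⊆ Y) (hCZ : C ⊆ Z) :
    M.rk (Y ∪ Z) + M.rk (X ∪ C) ≤ M.rk (Y ∪ C) + M.rk (X ∪ Z) := by
  have hunion : (Y ∪ C) ∪ (X ∪ Z) = Y ∪ Z := by tauto_set
  have hinter : X ∪ C ⊆ (Y ∪ C) ∩ (X ∪ Z) := by tauto_set
  have := M.rk_inter_add_rk_union_le (Y ∪ C) (X ∪ Z)
  rw [hunion] at this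
  linarith [M.rk_mono hinter]

end

theorem contract_strongMap_rank_general {α β : Type*} (M : Matroid α) (N : Matroid β)
    [M.Finite] [N.Finite] (f : α → β)
    (hrank : ∀ X Y : Set α, X ⊆ Y → Y ⊆ M.E →
      N.rk (f '' Y) + M.rk X ≤ M.rk Y + N.rk (f '' X))
    (Z' : Set β) :
    ∀ X Y : Set α, X ⊆ Y → Y ⊆ M.E \ (f ⁻¹' Z' ∩ M.E) →
      (N.contract' Z').rk (f '' Y) + (M.contract' (f ⁻¹' Z' ∩ M.E)).rk X ≤
        (M.contract' (f ⁻¹' Z' ∩ M.E)).rk Y + (N.contract' Z').rk (f '' X) := by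
  intro X Y hXY hY
  set C := f ⁻¹' Z' ∩ M.E
  have hM := hrank (X ∪ C) (Y ∪ C) (union_subset_union_left C hXY)
    (union_subset (hY.trans sdiff_subset) inter_subset_right)
  rw [image_union, image_union] at hM
  have hfC : f '' C ⊆ Z' := image_subset_iff.2 inter_subset_left
  have hN := N.rk_union_add_rk_union_le (image_mono (f := f) hXY) hfC
  have hMX := M.rk_contract'_add_rk C X
  have hMY := M.rk_contract'_add_rk C Y
  have hNX := N.rk_contract'_add_rk Z' (f '' X)
  have hNY := N.rk_contract'_add_rk Z' (f '' Y)
  omega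

/-- the strong-map rank condition is preserved under contraction when the
domain contraction set is the preimage of the codomain contraction set. -/
theorem contract_strongMap_rank {α β : Type*} (M : Matroid α) (N : Matroid β)
    [M.Finite] [N.Finite] (f : α → β) (hf : f '' M.E ⊆ N.E)
    (hrank : ∀ X Y : Set α, X ⊆ Y → Y ⊆ M.E →
      N.rk (f '' Y) + M.rk X ≤ M.rk Y + N.rk (f '' X))
    (Z' : Set β) (hZ' : Z' ⊆ N.E) :
    ∀ X Y : Set α, X ⊆ Y → Y ⊆ M.E \ (f ⁻¹' Z' ∩ M.E) →
      (N.contract' Z').rk (f '' Y) + (M.contract' (f ⁻¹' Z' ∩ M.E)).rk X ≤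
        (M.contract' (f ⁻¹' Z' ∩ M.E)).rk Y + (N.contract' Z').rk (f '' X) :=
  contract_strongMap_rank_general M N f hrank Z'

end Matroid
end

section
/- Let M and N be finite matroids on the same type α with M.E = N.E. If every flat of N is a flat of M (i.e. the identity is a strong map from M to N, so N is a quotient of M), then every flat of the dual matroid M✶ is a flat of the dual matroid N✶ (i.e. the identity is a strong map from N✶ to M✶). -/
open Set

namespace Matroid

variable {α β γ : Type*}

scoped infixl:75 " ＼ " => Matroid.delete'
scoped infixl:75 " ／ " => Matroid.contract'

end Matroid

/-! If `N` is a quotient of `M`, then `M.closure ⊆ N.closure`. Dual closure is described by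
closure of complements: for `e ∉ X`, `e ∈ M✶.closure X` iff `e ∉ M.closure (M.E \ X \ {e})`.
Hence the inclusion reverses under duality, and `N✶.closure F ⊆ M✶.closure F = F` for every
flat `F` of `M✶`. -/

namespace Matroid

section

variable {α : Type*}

/-- `e` is a loop of `M✶ ／ X = (M ＼ X)✶`, that is, a coloop of `M ＼ X`. -/
lemma mem_dual_closure_iff_notMem_closure_compl {M : Matroid α} {X : Set α} {e : α}
    (he : e ∈ M.E) (heX : e ∉ X) :
    e ∈ M✶.closure X ↔ e ∉ M.closure ((M.E \ X) \ {e}) := by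
  refine (and_iff_left heX).symm.trans ?_
  rw [← contract_isLoop_iff_mem_closure, ← dual_delete,
    dual_isLoop_iff_isColoop, delete_isColoop_iff]
  simp [he, heX]

lemma closure_subset_closure_of_forall_isFlat {M N : Matroid α} (hE : M.E ⊆ N.E)
    (h : ∀ F, N.IsFlat F → M.IsFlat F) (X : Set α) : M.closure X ⊆ N.closure X := by
  rw [← closure_inter_ground, ← (h _ (N.isFlat_closure X)).closure]
  exact M.closure_subset_closure ((inter_subset_inter_right X hE).trans
    (N.inter_ground_subset_closure X))

lemma dual_closure_subset_dual_closure {M N : Matroid α} (hE : M.E = N.E)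
    (hcl : ∀ X, M.closure X ⊆ N.closure X) (X : Set α) : N✶.closure X ⊆ M✶.closure X := by
  intro e he
  have heN : e ∈ N.E := N✶.closure_subset_ground X he
  have heM : e ∈ M.E := hE ▸ heN
  by_cases heX : e ∈ X
  · exact M✶.mem_closure_of_mem' heX heM
  rw [mem_dual_closure_iff_notMem_closure_compl heN heX] at he
  rw [mem_dual_closure_iff_notMem_closure_compl heM heX, hE]
  exact fun hmem ↦ he (hcl _ hmem)

end

theorem dual_flat_of_quotient_general {α : Type*} (M N : Matroid α)
    (hE : M.E = N.E) (h : ∀ F, N.IsFlat F → M.IsFlat F) :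
    ∀ F, M✶.IsFlat F → N✶.IsFlat F := by
  intro F hF
  have hcl := dual_closure_subset_dual_closure hE
    (closure_subset_closure_of_forall_isFlat hE.le h) F
  rw [hF.closure] at hcl
  exact isFlat_iff_closure_eq.2 (hcl.antisymm (N✶.subset_closure F (hE ▸ hF.subset_ground)))

/-- if `N` is a quotient of `M` (every flat of `N` is a flat of `M`, same
ground set) then `M✶` is a quotient of `N✶`. -/
theorem dual_flat_of_quotient {α : Type*} (M N : Matroid α) [M.Finite] [N.Finite]
    (hE : M.E = N.E) (h : ∀ F, N.IsFlat F → M.IsFlat F) :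
    ∀ F, M✶.IsFlat F → N✶.IsFlat F :=
  dual_flat_of_quotient_general M N hE h

end Matroid
end
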